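/- arXiv:1910.03770 — 3 statements merged into one kernel-verified Lean document; each statement's English description precedes it below -/
import Mathlib

section
/- Let n ≥ 0 and 0 ≤ k ≤ n, and let x and y be I-states of size k (k-element subsets of {0,1,…,n}). Then x and y are too far if and only if there exists an index i with 1 ≤ i ≤ n−k such that h_i^x ≥ h_{i+1}^y or h_i^y ≥ h_{i+1}^x. -/
/-- The `i`-th smallest element (0-indexed) of a finite set of natural numbers;
`nthElt s i` is `x_{i+1}` in the 1-indexed notation `x = {x_1 < x_2 < ⋯ < x_k}`. -/
def nthElt (s : Finset ℕ) (i : ℕ) : ℕ := (s.sort (· ≤ ·)).getD i 0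

/-- The hole set of an I-state: the complement `{0, …, n} \ s`. -/
def holes (n : ℕ) (s : Finset ℕ) : Finset ℕ := Finset.range (n + 1) \ s

/-- The `i`-th hole (0-indexed): `hnth n s i` is `h_{i+1}^s` in 1-indexed notation. -/
def hnth (n : ℕ) (s : Finset ℕ) (i : ℕ) : ℕ := nthElt (holes n s) i

/-- Two I-states of size `k` are too far if `|x_i − y_i| > 1` for some `1 ≤ i ≤ k`. -/
def TooFar (k : ℕ) (x y : Finset ℕ) : Prop :=
  ∃ i < k, 1 < ((nthElt x i : ℤ) - (nthElt y i : ℤ)).natAbs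

/-!
Write `c_s(m)` for the number of elements of `s` below `m`. Since `x_i < m ↔ i < c_x(m)`, a gap
`x_i + 2 ≤ y_i` exists iff `c_y(m + 1) < c_x(m)` for some `m`, and a hole overtaking
`h^y_{j+1} ≤ h^x_j` exists iff `c_{h^x}(m) + 2 ≤ c_{h^y}(m + 1)` for some `m`. Below `m ≤ n + 1`
there are exactly `m - c_s(m)` holes of `s`, so the two counting conditions coincide.
-/

open Finset

lemma nthElt_eq_nth (s : Finset ℕ) (i : ℕ) : nthElt s i = Nat.nth (· ∈ s) i := by
  have hf : (Set.ofPred (· ∈ s)).Finite := s.finite_toSet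
  rw [Nat.nth_eq_getD_sort hf, nthElt]
  congr
  ext; simp

lemma nthElt_lt_iff_lt_count (s : Finset ℕ) {i : ℕ} (hi : i < #s) (m : ℕ) :
    nthElt s i < m ↔ i < Nat.count (· ∈ s) m := by
  have hf : (Set.ofPred (· ∈ s)).Finite := s.finite_toSet
  have hi' : i < #hf.toFinset := by simpa [hf] using hi
  rw [nthElt_eq_nth]
  refine ⟨fun h => ?_, Nat.nth_lt_of_lt_count⟩
  calc i = Nat.count (· ∈ s) (Nat.nth (· ∈ s) i) := (Nat.count_nth_of_lt_card_finite hf hi').symm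
    _ < Nat.count (· ∈ s) m := Nat.count_strict_mono (Nat.nth_mem_of_lt_card hf hi') h

lemma count_mem_le_card (s : Finset ℕ) (m : ℕ) : Nat.count (· ∈ s) m ≤ #s := by
  rw [Nat.count_eq_card_filter_range]
  exact card_le_card fun a => by simp +contextual

lemma count_mem_eq_card {s : Finset ℕ} {n m : ℕ} (hs : s ⊆ range n) (hnm : n ≤ m) :
    Nat.count (· ∈ s) m = #s := by
  rw [Nat.count_eq_card_filter_range, filter_mem_eq_inter, inter_eq_right.2]
  exact hs.trans (range_subset_range.2 hnm)

lemma count_mem_holes_add_count_mem {n : ℕ} (s : Finset ℕ) {m : ℕ} (hm : m ≤ n + 1) :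
    Nat.count (· ∈ holes n s) m + Nat.count (· ∈ s) m = m := by
  have hholes : {a ∈ range m | a ∈ holes n s} = {a ∈ range m | a ∉ s} :=
    filter_congr fun a ha => by simp [holes, (mem_range.1 ha).trans_le hm]
  rw [Nat.count_eq_card_filter_range, Nat.count_eq_card_filter_range, hholes, add_comm,
    card_filter_add_card_filter_not, card_range]

lemma exists_nthElt_add_two_le_iff {s t : Finset ℕ} (hst : #s = #t) :
    (∃ i < #s, nthElt s i + 2 ≤ nthElt t i) ↔
      ∃ m, Nat.count (· ∈ t) (m + 1) < Nat.count (· ∈ s) m := by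
  constructor
  · rintro ⟨i, hi, hgap⟩
    refine ⟨nthElt s i + 1, ?_⟩
    have hs := (nthElt_lt_iff_lt_count s hi (nthElt s i + 1)).1 (by omega)
    have ht := (nthElt_lt_iff_lt_count t (hst ▸ hi) (nthElt s i + 1 + 1)).not.1 (by omega)
    omega
  · rintro ⟨m, hm⟩
    set i := Nat.count (· ∈ t) (m + 1)
    have hi : i < #s := hm.trans_le (count_mem_le_card s m)
    have hs := (nthElt_lt_iff_lt_count s hi m).2 hm
    have ht := (nthElt_lt_iff_lt_count t (hst ▸ hi) (m + 1)).not.2 (lt_irrefl i)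
    exact ⟨i, hi, by omega⟩

lemma exists_nthElt_succ_le_iff {s t : Finset ℕ} (hst : #s = #t) :
    (∃ j, j + 1 < #s ∧ nthElt s (j + 1) ≤ nthElt t j) ↔
      ∃ m, Nat.count (· ∈ t) m + 2 ≤ Nat.count (· ∈ s) (m + 1) := by
  constructor
  · rintro ⟨j, hj, hle⟩
    refine ⟨nthElt t j, ?_⟩
    have hs := (nthElt_lt_iff_lt_count s hj (nthElt t j + 1)).1 (by omega)
    have ht := (nthElt_lt_iff_lt_count t (by omega) (nthElt t j)).not.1 (lt_irrefl _)
    omega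
  · rintro ⟨m, hm⟩
    set j := Nat.count (· ∈ t) m
    have hj : j + 1 < #s := by have := count_mem_le_card s (m + 1); omega
    have hs := (nthElt_lt_iff_lt_count s hj (m + 1)).2 (by omega)
    have ht := (nthElt_lt_iff_lt_count t (by omega) m).not.2 (lt_irrefl j)
    exact ⟨j, hj, by omega⟩

lemma card_holes {n : ℕ} {s : Finset ℕ} (hs : s ⊆ range (n + 1)) :
    #(holes n s) = n + 1 - #s := by
  rw [holes, card_sdiff_of_subset hs, card_range]

lemma exists_nthElt_add_two_le_iff_exists_hnth_succ_le {n : ℕ} {s t : Finset ℕ}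
    (hs : s ⊆ range (n + 1)) (ht : t ⊆ range (n + 1)) (hst : #s = #t) :
    (∃ i < #s, nthElt s i + 2 ≤ nthElt t i) ↔
      ∃ j, j + 1 < n + 1 - #s ∧ hnth n t (j + 1) ≤ hnth n s j := by
  have hholes : #(holes n t) = #(holes n s) := by rw [card_holes hs, card_holes ht, hst]
  simp only [hnth]
  rw [exists_nthElt_add_two_le_iff hst, ← card_holes hs, ← hholes,
    exists_nthElt_succ_le_iff hholes]
  refine exists_congr fun m => ?_
  rcases le_or_gt m n with hm | hm
  · have := count_mem_holes_add_count_mem s (n := n) (m := m) (by omega)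
    have := count_mem_holes_add_count_mem t (n := n) (m := m + 1) (by omega)
    omega
  · rw [count_mem_eq_card hs hm, count_mem_eq_card ht (by omega),
      count_mem_eq_card (s := holes n s) sdiff_subset hm,
      count_mem_eq_card (s := holes n t) sdiff_subset (by omega), hst, hholes]
    omega

theorem tooFar_iff_holes_general (n k : ℕ) (x y : Finset ℕ)
    (hx : x ⊆ Finset.range (n + 1)) (hy : y ⊆ Finset.range (n + 1))
    (hxk : x.card = k) (hyk : y.card = k) :
    TooFar k x y ↔
      ∃ i < n - k, hnth n y (i + 1) ≤ hnth n x i ∨ hnth n x (i + 1) ≤ hnth n y i := by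
  have hxy : #x = #y := hxk.trans hyk.symm
  calc TooFar k x y
      ↔ ∃ i < k, nthElt x i + 2 ≤ nthElt y i ∨ nthElt y i + 2 ≤ nthElt x i :=
        exists_congr fun i => and_congr_right fun _ => by omega
    _ ↔ (∃ i < #x, nthElt x i + 2 ≤ nthElt y i) ∨ ∃ i < #y, nthElt y i + 2 ≤ nthElt x i := by
        rw [hxk, hyk, ← exists_or]; simp only [and_or_left]
    _ ↔ _ := by
        rw [exists_nthElt_add_two_le_iff_exists_hnth_succ_le hx hy hxy,
          exists_nthElt_add_two_le_iff_exists_hnth_succ_le hy hx hxy.symm, hxk, hyk, ← exists_or]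
        exact exists_congr fun j => by rw [← and_or_left]; exact and_congr_left' (by omega)

/-- Lemma: `x` and `y` are too far iff `h_i^x ≥ h_{i+1}^y` or `h_i^y ≥ h_{i+1}^x`
for some `1 ≤ i ≤ n − k` (stated here with 0-indexed `i < n − k`). -/
theorem tooFar_iff_holes (n k : ℕ) (hkn : k ≤ n) (x y : Finset ℕ)
    (hx : x ⊆ Finset.range (n + 1)) (hy : y ⊆ Finset.range (n + 1))
    (hxk : x.card = k) (hyk : y.card = k) :
    TooFar k x y ↔
      ∃ i < n - k, hnth n y (i + 1) ≤ hnth n x i ∨ hnth n x (i + 1) ≤ hnth n y i :=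
  tooFar_iff_holes_general n k x y hx hy hxk hyk
end

section
/- Let x and y be left I-states of size k (k-element subsets of {0,…,n−1}) that are not too far, and let [j_i+1, j_i+l_i] for 1 ≤ i ≤ n−k be the generating intervals for x and y (so j_i = max(h_i^x, h_i^y) and j_i + l_i = min(h_{i+1}^x, h_{i+1}^y)). Then the number of left I-states z of size k satisfying max(h_i^x, h_i^y) ≤ h_i^z < min(h_{i+1}^x, h_{i+1}^y) for all 1 ≤ i ≤ n−k is exactly l_1 · l_2 · ⋯ · l_{n−k}. (These z are exactly the sequences η for which the fork diagram with lower part determined by x and upper part determined by y is oriented.) -/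
/-- The condition `max(h_i^x, h_i^y) ≤ h_i^z < min(h_{i+1}^x, h_{i+1}^y)` for all
`1 ≤ i ≤ n − k` (0-indexed), i.e. the fork diagram determined by `x`, `z`, `y` is oriented. -/
def OrientedZ (n k : ℕ) (x y z : Finset ℕ) : Prop :=
  ∀ i < n - k, max (hnth n x i) (hnth n y i) ≤ hnth n z i ∧
    hnth n z i < min (hnth n x (i + 1)) (hnth n y (i + 1))

instance (n k : ℕ) (x y z : Finset ℕ) : Decidable (OrientedZ n k x y z) := by
  unfold OrientedZ; infer_instance

open Finset

lemma nthElt_eq_orderEmbOfFin {s : Finset ℕ} {m : ℕ} (h : s.card = m) (i : Fin m) :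
    nthElt s i = s.orderEmbOfFin h i := by
  subst h
  simp [nthElt, orderEmbOfFin_apply]

lemma nthElt_mem {s : Finset ℕ} {i : ℕ} (hi : i < s.card) : nthElt s i ∈ s := by
  simp [nthElt_eq_orderEmbOfFin rfl ⟨i, hi⟩]

lemma nthElt_le_nthElt {s : Finset ℕ} {i j : ℕ} (hij : i ≤ j) (hj : j < s.card) :
    nthElt s i ≤ nthElt s j := by
  rw [nthElt_eq_orderEmbOfFin rfl ⟨i, hij.trans_lt hj⟩, nthElt_eq_orderEmbOfFin rfl ⟨j, hj⟩]
  exact (s.orderEmbOfFin rfl).monotone hij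

lemma exists_nthElt_eq_of_mem {s : Finset ℕ} {t : ℕ} (ht : t ∈ s) :
    ∃ i < s.card, nthElt s i = t := by
  rw [← s.image_orderEmbOfFin_univ rfl, mem_image] at ht
  obtain ⟨i, -, rfl⟩ := ht
  exact ⟨i, i.isLt, nthElt_eq_orderEmbOfFin rfl i⟩

lemma nthElt_eq_of_strictMono {s : Finset ℕ} {m : ℕ} (h : s.card = m) {g : Fin m → ℕ}
    (hgs : ∀ i, g i ∈ s) (hg : StrictMono g) (i : Fin m) : nthElt s i = g i := by
  rw [nthElt_eq_orderEmbOfFin h, ← orderEmbOfFin_unique h hgs hg]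

lemma hnth_le (n : ℕ) (s : Finset ℕ) (i : ℕ) : hnth n s i ≤ n := by
  by_cases hi : i < (holes n s).card
  · exact Nat.lt_succ_iff.1 (mem_range.1 (sdiff_subset (nthElt_mem hi)))
  · rw [hnth, nthElt, List.getD_eq_default _ _ (by simpa using hi)]
    exact n.zero_le

section LeftState

variable {n k : ℕ} {z : Finset ℕ}

lemma card_holes_s2 (hz : z ⊆ range n) (hzk : z.card = k) (hkn : k ≤ n) :
    (holes n z).card = n - k + 1 := by
  rw [holes, card_sdiff_of_subset (hz.trans (range_subset_range.2 n.le_succ)), card_range, hzk]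
  omega

lemma mem_holes_self (hz : z ⊆ range n) : n ∈ holes n z :=
  mem_sdiff.2 ⟨self_mem_range_succ n, fun h => (lt_irrefl n) (mem_range.1 (hz h))⟩

lemma hnth_last (hz : z ⊆ range n) (hzk : z.card = k) (hkn : k ≤ n) :
    hnth n z (n - k) = n := by
  have hcard := card_holes_s2 hz hzk hkn
  obtain ⟨j, hj, hjn⟩ := exists_nthElt_eq_of_mem (mem_holes_self hz)
  refine (hnth_le n z _).antisymm ?_
  conv_lhs => rw [← hjn]
  exact nthElt_le_nthElt (by omega) (by omega)

end LeftState

def stateOfHoles (n : ℕ) {m : ℕ} (g : Fin m → ℕ) : Finset ℕ := range n \ image g univ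

section StateOfHoles

variable {n m : ℕ} {g : Fin m → ℕ}

lemma card_stateOfHoles (hg : Function.Injective g) (hgn : ∀ i, g i < n) :
    (stateOfHoles n g).card = n - m := by
  rw [stateOfHoles, card_sdiff_of_subset (fun t ht => ?_), card_range,
    card_image_of_injective _ hg, card_univ, Fintype.card_fin]
  obtain ⟨i, -, rfl⟩ := mem_image.1 ht
  exact mem_range.2 (hgn i)

lemma holes_stateOfHoles (hgn : ∀ i, g i < n) :
    holes n (stateOfHoles n g) = image (Fin.snoc g n) univ := by
  ext t
  simp only [holes, stateOfHoles, mem_sdiff, mem_range, mem_image, mem_univ, true_and, not_and,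
    not_not, Fin.exists_fin_succ', Fin.snoc_castSucc, Fin.snoc_last]
  constructor
  · rintro ⟨ht, hmem⟩
    rcases (Nat.lt_succ_iff.1 ht).lt_or_eq with htn | rfl
    · exact Or.inl (hmem htn)
    · exact Or.inr rfl
  · rintro (⟨i, rfl⟩ | rfl)
    · exact ⟨(hgn i).trans n.lt_succ_self, fun _ => ⟨i, rfl⟩⟩
    · exact ⟨n.lt_succ_self, fun h => absurd h (lt_irrefl n)⟩

lemma hnth_stateOfHoles (hg : StrictMono g) (hgn : ∀ i, g i < n) (i : Fin m) :
    hnth n (stateOfHoles n g) i = g i := by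
  have hsnoc : StrictMono (Fin.snoc g n : Fin (m + 1) → ℕ) := by
    rw [← Fin.insertNth_last', Fin.strictMono_insertNth_iff]
    exact ⟨hg, fun i _ => hgn i, fun i hi => absurd hi (not_le.2 (Fin.castSucc_lt_last i))⟩
  have hcard : (holes n (stateOfHoles n g)).card = m + 1 := by
    rw [holes_stateOfHoles hgn, card_image_of_injective _ hsnoc.injective, card_univ,
      Fintype.card_fin]
  have := nthElt_eq_of_strictMono hcard (fun j => ?_) hsnoc i.castSucc
  · simpa [hnth] using this
  · rw [holes_stateOfHoles hgn]
    exact mem_image_of_mem _ (mem_univ j)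

end StateOfHoles

lemma stateOfHoles_hnth {n k : ℕ} {z : Finset ℕ} (hz : z ⊆ range n) (hzk : z.card = k)
    (hkn : k ≤ n) : stateOfHoles n (fun i : Fin (n - k) => hnth n z i) = z := by
  have hcard := card_holes_s2 hz hzk hkn
  ext t
  simp only [stateOfHoles, mem_sdiff, mem_range, mem_image, mem_univ, true_and, not_exists]
  constructor
  · rintro ⟨htn, hne⟩
    by_contra htz
    obtain ⟨j, hj, rfl⟩ := exists_nthElt_eq_of_mem (s := holes n z)
      (mem_sdiff.2 ⟨mem_range.2 (htn.trans n.lt_succ_self), htz⟩)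
    have hjk : j ≠ n - k := by
      rintro rfl
      exact htn.ne (hnth_last hz hzk hkn)
    exact hne ⟨j, by omega⟩ rfl
  · intro htz
    refine ⟨mem_range.1 (hz htz), fun i hi => ?_⟩
    have : hnth n z i ∈ holes n z := nthElt_mem (by omega)
    exact (mem_sdiff.1 this).2 (hi ▸ htz)

/-- `[j_i, j_i + l_i)`, the generating interval `[j_i + 1, j_i + l_i]` shifted down by one. -/
def holeBox (n : ℕ) (x y : Finset ℕ) (i : ℕ) : Finset ℕ :=
  Ico (max (hnth n x i) (hnth n y i)) (min (hnth n x (i + 1)) (hnth n y (i + 1)))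

section HoleBox

variable {n : ℕ} {x y : Finset ℕ}

lemma lt_of_mem_holeBox {i t : ℕ} (ht : t ∈ holeBox n x y i) : t < n :=
  calc t < min (hnth n x (i + 1)) (hnth n y (i + 1)) := (mem_Ico.1 ht).2
    _ ≤ hnth n x (i + 1) := min_le_left _ _
    _ ≤ n := hnth_le n x _

lemma strictMono_of_mem_holeBox {m : ℕ} {g : Fin m → ℕ}
    (hg : ∀ i : Fin m, g i ∈ holeBox n x y i) : StrictMono g := by
  cases m with
  | zero => exact fun i => i.elim0
  | succ m =>
    refine Fin.strictMono_iff_lt_succ.2 fun i => ?_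
    calc g i.castSucc < min (hnth n x (i + 1)) (hnth n y (i + 1)) := (mem_Ico.1 (hg _)).2
      _ ≤ max (hnth n x (i + 1)) (hnth n y (i + 1)) := min_le_max
      _ ≤ g i.succ := (mem_Ico.1 (hg i.succ)).1

lemma orientedZ_iff_forall_mem_holeBox {k : ℕ} {z : Finset ℕ} :
    OrientedZ n k x y z ↔ ∀ i : Fin (n - k), hnth n z i ∈ holeBox n x y i := by
  simp only [OrientedZ, holeBox, mem_Ico, Fin.forall_iff]

lemma hnth_stateOfHoles_of_mem_holeBox {m : ℕ} {g : Fin m → ℕ}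
    (hg : ∀ i : Fin m, g i ∈ holeBox n x y i) (i : Fin m) :
    hnth n (stateOfHoles n g) i = g i :=
  hnth_stateOfHoles (strictMono_of_mem_holeBox hg) (fun j => lt_of_mem_holeBox (hg j)) i

lemma stateOfHoles_oriented {k : ℕ} (hkn : k ≤ n) {g : Fin (n - k) → ℕ}
    (hg : ∀ i : Fin (n - k), g i ∈ holeBox n x y i) :
    stateOfHoles n g ⊆ range n ∧ (stateOfHoles n g).card = k ∧
      OrientedZ n k x y (stateOfHoles n g) := by
  refine ⟨sdiff_subset, ?_, ?_⟩
  · rw [card_stateOfHoles (strictMono_of_mem_holeBox hg).injective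
      (fun i => lt_of_mem_holeBox (hg i))]
    omega
  · simpa only [orientedZ_iff_forall_mem_holeBox, hnth_stateOfHoles_of_mem_holeBox hg] using hg

end HoleBox

theorem count_oriented_general (n k : ℕ) (hkn : k ≤ n) (x y : Finset ℕ) :
    (((Finset.range n).powerset.filter
        (fun z => z.card = k ∧ OrientedZ n k x y z)).card)
      = ∏ i ∈ Finset.range (n - k),
          (min (hnth n x (i + 1)) (hnth n y (i + 1)) - max (hnth n x i) (hnth n y i)) := by
  have hbij : #((range n).powerset.filter fun z => z.card = k ∧ OrientedZ n k x y z) =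
      #(Fintype.piFinset fun i : Fin (n - k) => holeBox n x y i) := by
    refine card_nbij' (fun z i => hnth n z i) (stateOfHoles n) (fun z h => ?_)
      (fun g h => ?_) (fun z h => ?_) (fun g h => ?_) <;>
    simp only [coe_filter, mem_powerset, Set.mem_ofPred_eq, Fintype.coe_piFinset, Set.mem_pi,
      Set.mem_univ, mem_coe, forall_const] at h ⊢
    · exact orientedZ_iff_forall_mem_holeBox.1 h.2.2
    · exact stateOfHoles_oriented hkn h
    · exact stateOfHoles_hnth h.1 h.2.1 hkn
    · exact funext (hnth_stateOfHoles_of_mem_holeBox h)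
  rw [hbij, Fintype.card_piFinset, Fin.prod_univ_eq_prod_range (fun i => #(holeBox n x y i))]
  simp only [holeBox, Nat.card_Ico]

/-- The number of left I-states `z` of size `k` with
`max(h_i^x, h_i^y) ≤ h_i^z < min(h_{i+1}^x, h_{i+1}^y)` for all `i` is `l_1 ⋯ l_{n−k}`,
the product of the lengths of the generating intervals between `x` and `y`. -/
theorem count_oriented (n k : ℕ) (hkn : k ≤ n) (x y : Finset ℕ)
    (hx : x ⊆ Finset.range n) (hy : y ⊆ Finset.range n)
    (hxk : x.card = k) (hyk : y.card = k) (hfar : ¬ TooFar k x y) :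
    (((Finset.range n).powerset.filter
        (fun z => z.card = k ∧ OrientedZ n k x y z)).card)
      = ∏ i ∈ Finset.range (n - k),
          (min (hnth n x (i + 1)) (hnth n y (i + 1)) - max (hnth n x i) (hnth n y i)) :=
  count_oriented_general n k hkn x y
end

section
/- Let K be a commutative ring, q ∈ K, and let M be a free K-module with basis e_1, …, e_n. In the exterior algebra of M set ℓ_1 = e_1 and ℓ_m = e_m + q·e_{m−1} for 2 ≤ m ≤ n. Then for all 1 < j ≤ i ≤ n: ℓ_i ∧ ℓ_{i−1} ∧ ⋯ ∧ ℓ_j = Σ_{m=j−1}^{i} q^{m−j+1} · e_i ∧ e_{i−1} ∧ ⋯ ∧ ê_m ∧ ⋯ ∧ e_{j−1}, where each summand is the wedge of the basis vectors with indices i, i−1, …, j−1 taken in decreasing order with e_m omitted. Moreover, for all 1 ≤ i ≤ n: ℓ_i ∧ ℓ_{i−1} ∧ ⋯ ∧ ℓ_1 = e_i ∧ e_{i−1} ∧ ⋯ ∧ e_1. -/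
/-!
Peel off the top factor `ℓ_i = e_i + q e_{i-1}`. Multiplying a summand of the expansion for
`ℓ_{i-1} ∧ ⋯ ∧ ℓ_j` by `e_i` gives the same summand one level up, while multiplying by `e_{i-1}`
kills every summand that still contains `e_{i-1}`; the only survivor is the summand omitting
`e_{i-1}`, which becomes the new summand omitting `e_i`, with one more factor `q`. When the
product reaches down to `ℓ_1 = e_1` nothing is omitted at all: by induction the product below
`ℓ_i` is `e_{i-1} ∧ ⋯ ∧ e_1`, which `q e_{i-1}` annihilates.
-/

open List

section Monoid

variable {A : Type*} [Monoid A]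

/-- `descProd f a k = f (a + k - 1) * ⋯ * f (a + 1) * f a`. -/
def descProd (f : ℕ → A) (a k : ℕ) : A :=
  ((range' a k).reverse.map f).prod

def descProdOmit (f : ℕ → A) (a k m : ℕ) : A :=
  (((range' a k).reverse.filter (fun t => t != m)).map f).prod

theorem descProd_zero (f : ℕ → A) (a : ℕ) : descProd f a 0 = 1 := rfl

theorem descProd_succ (f : ℕ → A) (a k : ℕ) :
    descProd f a (k + 1) = f (a + k) * descProd f a k := by
  simp [descProd, range'_concat]

theorem descProdOmit_succ_of_ne (f : ℕ → A) {a k m : ℕ} (h : a + k ≠ m) :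
    descProdOmit f a (k + 1) m = f (a + k) * descProdOmit f a k m := by
  simp [descProdOmit, range'_concat, h]

theorem descProdOmit_succ_self (f : ℕ → A) (a k : ℕ) :
    descProdOmit f a (k + 1) (a + k) = descProd f a k := by
  have hkeep : (range' a k).reverse.filter (fun t => t != a + k) = (range' a k).reverse :=
    filter_eq_self.mpr fun t ht => by
      have := mem_range'_1.mp (mem_reverse.mp ht)
      simp only [bne_iff_ne, ne_eq]
      omega
  simp [descProdOmit, descProd, range'_concat, hkeep]

end Monoid

section SquareZero

variable {K A : Type*} [CommSemiring K] [Semiring A] [Algebra K A]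
  {u ℓ : ℕ → A} {q : K} {a : ℕ}

theorem descProd_eq_sum_descProdOmit (hu : ∀ t, u t * u t = 0)
    (hℓ : ∀ t, a < t → ℓ t = u t + q • u (t - 1)) (k : ℕ) :
    descProd ℓ (a + 1) k =
      ∑ m ∈ Finset.Icc a (a + k), q ^ (m - a) • descProdOmit u a (k + 1) m := by
  induction k with
  | zero => simp [descProd_zero, descProdOmit]
  | succ k ih =>
    set S := ∑ m ∈ Finset.Icc a (a + k), q ^ (m - a) • descProdOmit u a (k + 1) m
    have hextend : u (a + k + 1) * S =
        ∑ m ∈ Finset.Icc a (a + k), q ^ (m - a) • descProdOmit u a (k + 2) m := by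
      rw [Finset.mul_sum]
      refine Finset.sum_congr rfl fun m hm => ?_
      have hm := Finset.mem_Icc.mp hm
      rw [mul_smul_comm, descProdOmit_succ_of_ne u (k := k + 1) (by omega), add_assoc]
    -- `u (a + k)` annihilates every summand still containing it.
    have hcollapse : u (a + k) * S = q ^ k • descProd u a (k + 1) := by
      rw [Finset.mul_sum, Finset.sum_eq_single_of_mem (a + k) (by simp)]
      · rw [mul_smul_comm, descProdOmit_succ_self, ← descProd_succ, Nat.add_sub_cancel_left]
      · intro m hm hne
        obtain ⟨k, rfl⟩ : ∃ k', k = k' + 1 := ⟨k - 1, by grind⟩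
        rw [mul_smul_comm, descProdOmit_succ_of_ne u (by omega), ← mul_assoc, ← add_assoc,
          hu, zero_mul, smul_zero]
    calc descProd ℓ (a + 1) (k + 1)
        = (u (a + k + 1) + q • u (a + k)) * S := by
          rw [descProd_succ, ih, hℓ _ (by omega), add_right_comm a 1 k, Nat.add_sub_cancel]
      _ = ∑ m ∈ Finset.Icc a (a + k), q ^ (m - a) • descProdOmit u a (k + 2) m
            + q ^ (k + 1) • descProd u a (k + 1) := by
          rw [add_mul, smul_mul_assoc, hextend, hcollapse, smul_smul, pow_succ']
      _ = ∑ m ∈ Finset.Icc a (a + (k + 1)), q ^ (m - a) • descProdOmit u a (k + 2) m := by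
          rw [← add_assoc, Finset.sum_Icc_succ_top (by omega), ← descProdOmit_succ_self,
            add_assoc a k 1, Nat.add_sub_cancel_left]

theorem descProd_eq_descProd (hu : ∀ t, u t * u t = 0) (hbot : ℓ a = u a)
    (hℓ : ∀ t, a < t → ℓ t = u t + q • u (t - 1)) (k : ℕ) :
    descProd ℓ a k = descProd u a k := by
  induction k with
  | zero => rfl
  | succ k ih =>
    rw [descProd_succ, descProd_succ, ih]
    rcases k with _ | k
    · simp [hbot]
    · rw [hℓ _ (by omega), ← add_assoc, Nat.add_sub_cancel, add_mul, smul_mul_assoc,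
        descProd_succ, ← mul_assoc (u (a + k)), hu, zero_mul, smul_zero, add_zero]

end SquareZero

theorem ell_wedge_expansion_general (n : ℕ) (K : Type*) [CommRing K] (q : K)
    (M : Type*) [AddCommGroup M] [Module K M]
    (e : ℕ → M)
    (ℓ : ℕ → ExteriorAlgebra K M)
    (hℓ1 : ℓ 1 = ExteriorAlgebra.ι K (e 1))
    (hℓ : ∀ m, 2 ≤ m → ℓ m = ExteriorAlgebra.ι K (e m) + q • ExteriorAlgebra.ι K (e (m - 1))) :
    (∀ i j : ℕ, 1 < j → j ≤ i → i ≤ n →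
      ((List.range' j (i - j + 1)).reverse.map ℓ).prod =
        ∑ m ∈ Finset.Icc (j - 1) i, q ^ (m + 1 - j) •
          (((List.range' (j - 1) (i - (j - 1) + 1)).reverse.filter (fun t => t != m)).map
            (fun t => ExteriorAlgebra.ι K (e t))).prod) ∧
    (∀ i : ℕ, 1 ≤ i → i ≤ n →
      ((List.range' 1 i).reverse.map ℓ).prod =
        ((List.range' 1 i).reverse.map (fun t => ExteriorAlgebra.ι K (e t))).prod) := by
  have hu (t : ℕ) := ExteriorAlgebra.ι_sq_zero (R := K) (e t)
  refine ⟨fun i j hj hji _ => ?_, fun i _ _ => descProd_eq_descProd hu hℓ1 hℓ i⟩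
  obtain ⟨a, rfl⟩ : ∃ a, j = a + 1 := ⟨j - 1, by omega⟩
  obtain ⟨k, rfl⟩ : ∃ k, i = a + k := ⟨i - a, by omega⟩
  have hlen : a + k - (a + 1) + 1 = k := by omega
  simp only [hlen, Nat.add_sub_cancel, Nat.add_sub_cancel_left, Nat.add_sub_add_right]
  exact descProd_eq_sum_descProdOmit hu (fun t ht => hℓ t (by omega)) k

/-- Expansion identities in the exterior algebra of a free module `M` over a commutative
ring `K` with basis `e_1, …, e_n` (here `e : ℕ → M` with `B i = e (i+1)` for a basis `B`),
where `ℓ_1 = e_1` and `ℓ_m = e_m + q e_{m−1}` for `2 ≤ m ≤ n`: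
(1) for `1 < j ≤ i ≤ n`,
  `ℓ_i ∧ ℓ_{i−1} ∧ ⋯ ∧ ℓ_j = Σ_{m=j−1}^{i} q^{m−j+1} e_i ∧ ⋯ ∧ ê_m ∧ ⋯ ∧ e_{j−1}`;
(2) for `1 ≤ i ≤ n`, `ℓ_i ∧ ℓ_{i−1} ∧ ⋯ ∧ ℓ_1 = e_i ∧ e_{i−1} ∧ ⋯ ∧ e_1`.
Wedge products are products in `ExteriorAlgebra K M`, taken in decreasing index order. -/
theorem ell_wedge_expansion (n : ℕ) (K : Type*) [CommRing K] (q : K)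
    (M : Type*) [AddCommGroup M] [Module K M]
    (e : ℕ → M) (B : Module.Basis (Fin n) K M) (hB : ∀ i : Fin n, B i = e ((i : ℕ) + 1))
    (ℓ : ℕ → ExteriorAlgebra K M)
    (hℓ1 : ℓ 1 = ExteriorAlgebra.ι K (e 1))
    (hℓ : ∀ m, 2 ≤ m → ℓ m = ExteriorAlgebra.ι K (e m) + q • ExteriorAlgebra.ι K (e (m - 1))) :
    (∀ i j : ℕ, 1 < j → j ≤ i → i ≤ n →
      ((List.range' j (i - j + 1)).reverse.map ℓ).prod =
        ∑ m ∈ Finset.Icc (j - 1) i, q ^ (m + 1 - j) •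
          (((List.range' (j - 1) (i - (j - 1) + 1)).reverse.filter (fun t => t != m)).map
            (fun t => ExteriorAlgebra.ι K (e t))).prod) ∧
    (∀ i : ℕ, 1 ≤ i → i ≤ n →
      ((List.range' 1 i).reverse.map ℓ).prod =
        ((List.range' 1 i).reverse.map (fun t => ExteriorAlgebra.ι K (e t))).prod) :=
  ell_wedge_expansion_general n K q M e ℓ hℓ1 hℓ
end
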